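/- Let (Ω, ℱ, P) be a probability space, γ > 0, N ∈ ℕ, and r, y ∈ ℝ, T ≥ 0. Let X : Ω → ℝ have Gaussian law with mean m and variance v ≥ 0, let Z : Ω → Fin N be measurable and independent of X, and let δ : Fin N → ℝ. Define the futures claim F := exp(−(r + y)·T) · X · δ(Z). Then the entropic risk of F is e_γ(F) = −γ · ln ( Σ_{i} P(Z = i) · exp( −δ_i·exp(−(r+y)T)·m/γ + δ_i²·exp(−2(r+y)T)·v/(2γ²) ) ). -/

import Mathlib

open MeasureTheory ProbabilityTheory
open scoped NNReal ENNReal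
open Real


lemma gauss_pdf_mul_exp (m : ℝ) {v : ℝ≥0} (hv : v ≠ 0) (t x : ℝ) :
    gaussianPDFReal m v x * Real.exp (t * x)
      = Real.exp (t * m + (v : ℝ) * t ^ 2 / 2) * gaussianPDFReal (m + v * t) v x := by
  have hv' : (v : ℝ) ≠ 0 := by exact_mod_cast hv
  simp only [gaussianPDFReal]
  rw [mul_assoc, ← Real.exp_add]
  rw [show Real.exp (t * m + (v : ℝ) * t ^ 2 / 2) *
      ((Real.sqrt (2 * π * v))⁻¹ * Real.exp (-(x - (m + v * t)) ^ 2 / (2 * v)))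
      = (Real.sqrt (2 * π * v))⁻¹ *
        Real.exp (t * m + (v : ℝ) * t ^ 2 / 2 + -(x - (m + v * t)) ^ 2 / (2 * v)) by
    rw [mul_left_comm, ← Real.exp_add]]
  congr 1
  field_simp
  ring

lemma gauss_exp_integrable (m : ℝ) (v : ℝ≥0) (t : ℝ) :
    Integrable (fun x => Real.exp (t * x)) (gaussianReal m v) := by
  by_cases hv : v = 0
  · subst hv
    rw [gaussianReal_zero_var]
    constructor
    · exact ((measurable_const.mul measurable_id).exp).aestronglyMeasurable
    · simp [HasFiniteIntegral, lintegral_dirac]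
  · rw [gaussianReal_of_var_ne_zero m hv]
    have hmeas : Measurable fun x => (gaussianPDFReal m v x).toNNReal :=
      (measurable_gaussianPDFReal m v).real_toNNReal
    rw [show gaussianPDF m v = fun x => ((gaussianPDFReal m v x).toNNReal : ℝ≥0∞) from rfl,
      integrable_withDensity_iff_integrable_smul hmeas]
    have : (fun x => (gaussianPDFReal m v x).toNNReal • Real.exp (t * x))
        = fun x => Real.exp (t * m + (v : ℝ) * t ^ 2 / 2) * gaussianPDFReal (m + v * t) v x := by
      funext x
      rw [NNReal.smul_def, Real.coe_toNNReal _ (gaussianPDFReal_nonneg m v x), smul_eq_mul,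
        gauss_pdf_mul_exp m hv t x]
    rw [this]
    exact (integrable_gaussianPDFReal _ _).const_mul _

lemma gauss_mgf (m : ℝ) (v : ℝ≥0) (t : ℝ) :
    ∫ x, Real.exp (t * x) ∂(gaussianReal m v) = Real.exp (t * m + (v : ℝ) * t ^ 2 / 2) := by
  by_cases hv : v = 0
  · subst hv
    rw [gaussianReal_zero_var, integral_dirac]
    norm_num
  · rw [gaussianReal_of_var_ne_zero m hv]
    have hmeas : Measurable fun x => (gaussianPDFReal m v x).toNNReal :=
      (measurable_gaussianPDFReal m v).real_toNNReal
    rw [show gaussianPDF m v = fun x => ((gaussianPDFReal m v x).toNNReal : ℝ≥0∞) from rfl,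
      integral_withDensity_eq_integral_smul hmeas]
    have : (fun x => (gaussianPDFReal m v x).toNNReal • Real.exp (t * x))
        = fun x => Real.exp (t * m + (v : ℝ) * t ^ 2 / 2) * gaussianPDFReal (m + v * t) v x := by
      funext x
      rw [NNReal.smul_def, Real.coe_toNNReal _ (gaussianPDFReal_nonneg m v x), smul_eq_mul,
        gauss_pdf_mul_exp m hv t x]
    rw [this, integral_const_mul, integral_gaussianPDFReal_eq_one _ hv, mul_one]

/-- Entropic risk of a regime-dependent futures claim `F = e^{-(r+y)T} X · δ(Z)` on a Gaussian
spot price `X` independent of the regime variable `Z`: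
`e_γ(F) = -γ ln ( Σ_i P(Z = i) exp(−δ_i e^{-(r+y)T} m/γ + δ_i² e^{-2(r+y)T} v/(2γ²)) )`. -/
theorem entropic_risk_regime_futures {Ω : Type*} [MeasurableSpace Ω]
    (P : Measure Ω) [IsProbabilityMeasure P]
    (γ : ℝ) (hγ : 0 < γ) (N : ℕ) (r y T : ℝ) (hT : 0 ≤ T) (m : ℝ) (v : ℝ≥0)
    (X : Ω → ℝ) (hX : Measurable X) (hlaw : P.map X = gaussianReal m v)
    (Z : Ω → Fin N) (hZ : Measurable Z) (hindep : IndepFun X Z P)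
    (δ : Fin N → ℝ) :
    -γ * Real.log (∫ ω, Real.exp (-(Real.exp (-(r + y) * T) * X ω * δ (Z ω)) / γ) ∂P) =
      -γ * Real.log (∑ i : Fin N, (P (Z ⁻¹' {i})).toReal *
        Real.exp (-(δ i * Real.exp (-(r + y) * T) * m) / γ +
          (δ i) ^ 2 * Real.exp (-2 * (r + y) * T) * (v : ℝ) / (2 * γ ^ 2))) := by
  set c : ℝ := Real.exp (-(r + y) * T) with hc
  set t : Fin N → ℝ := fun i => -(c * δ i) / γ with ht
  -- integrability of exp(t i * X) under P
  have hXint : ∀ i : Fin N, Integrable (fun ω => Real.exp (t i * X ω)) P := by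
    intro i
    have := gauss_exp_integrable m v (t i)
    rw [← hlaw] at this
    exact (integrable_map_measure this.aestronglyMeasurable hX.aemeasurable).mp this
  have hXmgf : ∀ i : Fin N, ∫ ω, Real.exp (t i * X ω) ∂P
      = Real.exp (t i * m + (v : ℝ) * (t i) ^ 2 / 2) := by
    intro i
    rw [← gauss_mgf m v (t i), ← hlaw,
      integral_map hX.aemeasurable]
    exact ((measurable_const.mul measurable_id).exp).aestronglyMeasurable
  -- decompose integrand
  have hsplit : (fun ω => Real.exp (-(c * X ω * δ (Z ω)) / γ))
      = fun ω => ∑ i : Fin N,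
        Set.indicator (Z ⁻¹' {i}) (fun ω' => Real.exp (t i * X ω')) ω := by
    funext ω
    rw [Finset.sum_eq_single (Z ω)]
    · rw [Set.indicator_of_mem (by simp)]
      congr 1
      simp only [ht]
      ring
    · intro b _ hb
      exact Set.indicator_of_notMem
        (by simp only [Set.mem_preimage, Set.mem_singleton_iff]
            exact fun h => hb h.symm) _
    · simp
  have hii : ∀ i : Fin N, Integrable
      (Set.indicator (Z ⁻¹' {i}) (fun ω' => Real.exp (t i * X ω'))) P :=
    fun i => (hXint i).indicator (hZ (measurableSet_singleton i))
  have hint_eq : (∫ ω, Real.exp (-(c * X ω * δ (Z ω)) / γ) ∂P)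
      = ∑ i : Fin N, (P (Z ⁻¹' {i})).toReal *
        Real.exp (-(δ i * c * m) / γ +
          (δ i) ^ 2 * Real.exp (-2 * (r + y) * T) * (v : ℝ) / (2 * γ ^ 2)) := by
    rw [hsplit, integral_finset_sum _ (fun i _ => hii i)]
    refine Finset.sum_congr rfl fun i _ => ?_
    have hprod : Set.indicator (Z ⁻¹' {i}) (fun ω' => Real.exp (t i * X ω'))
        = fun ω => Real.exp (t i * X ω) *
            Set.indicator ({i} : Set (Fin N)) (fun _ => (1 : ℝ)) (Z ω) := by
      funext ω
      by_cases h : Z ω = i <;> simp [Set.indicator, h]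
    rw [hprod]
    have hIndep2 : IndepFun (fun ω => Real.exp (t i * X ω))
        (fun ω => Set.indicator ({i} : Set (Fin N)) (fun _ => (1 : ℝ)) (Z ω)) P :=
      hindep.comp ((measurable_const.mul measurable_id).exp)
        (measurable_const.indicator (measurableSet_singleton i))
    rw [hIndep2.integral_fun_mul_eq_mul_integral (hXint i).aestronglyMeasurable
      ((measurable_const.indicator (measurableSet_singleton i)).comp hZ).aestronglyMeasurable]
    have hind : (fun ω => Set.indicator ({i} : Set (Fin N)) (fun _ => (1 : ℝ)) (Z ω))
        = Set.indicator (Z ⁻¹' {i}) (fun _ => (1 : ℝ)) := by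
      funext ω; by_cases h : Z ω = i <;> simp [Set.indicator, h]
    rw [hind, integral_indicator_const (1 : ℝ) (hZ (measurableSet_singleton i)),
      smul_eq_mul, mul_one, hXmgf i]
    rw [mul_comm]
    congr 1
    have hc2 : Real.exp (-2 * (r + y) * T) = c ^ 2 := by
      rw [hc, ← Real.exp_nat_mul]
      norm_num
      ring_nf
    rw [hc2, ht]
    field_simp
  rw [hint_eq]
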